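/- arXiv:2304.01639 — 2 statements merged into one kernel-verified Lean document; each statement's English description precedes it below -/
import Mathlib

section
/- Let n be a positive integer, σ ≥ 0 a real number, and let ω be a random vector in ℝⁿ whose law is the product measure of n independent one-dimensional Gaussian measures N(0,σ²). Let W be a symmetric real n×n matrix, let a ∈ ℝⁿ be a fixed vector, and let κ ∈ ℝ be a fixed constant. Then the variance of the random variable (a + ω)ᵀ W (a + ω) + κ equals 4σ²·aᵀWᵀWa + 2σ⁴·tr(WᵀW); i.e. ∫ ((a+ω)ᵀW(a+ω) + κ − (aᵀWa + σ²tr(W) + κ))² dP(ω) = 4σ²·‖Wa‖² + 2σ⁴·tr(WᵀW). -/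
/-!
With `w = W a`, the centred CBC is `2 ⟨w, ω⟩ + (ωᵀ W ω - σ² tr W)`. The cross term is odd in
`ω`, so it integrates to zero by the symmetry of the Gaussian, and `E ⟨w, ω⟩² = σ² ‖w‖²`. What is
left is the variance of the Gaussian quadratic form, `σ⁴ (tr (Wᵀ W) + tr (W W))`, which follows
from Isserlis' formula `E[ω_i ω_j ω_k ω_l] = σ⁴ (δ_ij δ_kl + δ_ik δ_jl + δ_il δ_jk)`. Its
one-dimensional input, the moments of `N(0, σ²)` up to order four, is read off the derivatives at
`0` of the moment generating function `exp (σ² t² / 2)`.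
-/

open MeasureTheory ProbabilityTheory Matrix
open scoped NNReal ENNReal

open Polynomial in
noncomputable def expHalfMulSqDerivPoly (v : ℝ) : ℕ → ℝ[X]
  | 0 => 1
  | k + 1 => derivative (expHalfMulSqDerivPoly v k) + C v * X * expHalfMulSqDerivPoly v k

lemma iteratedDeriv_exp_half_mul_sq (v : ℝ) (k : ℕ) :
    iteratedDeriv k (fun t => Real.exp (v * t ^ 2 / 2))
      = fun t => (expHalfMulSqDerivPoly v k).eval t * Real.exp (v * t ^ 2 / 2) := by
  induction k with
  | zero => simp [expHalfMulSqDerivPoly]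
  | succ k ih =>
    rw [iteratedDeriv_succ, ih]
    funext t
    have hexp : HasDerivAt (fun t => Real.exp (v * t ^ 2 / 2))
        (Real.exp (v * t ^ 2 / 2) * (v * t)) t := by
      convert (((hasDerivAt_pow 2 t).const_mul v).div_const 2).exp using 1
      ring
    refine (((expHalfMulSqDerivPoly v k).hasDerivAt t).mul hexp).deriv.trans ?_
    simp only [expHalfMulSqDerivPoly, Polynomial.eval_add, Polynomial.eval_mul,
      Polynomial.eval_C, Polynomial.eval_X]
    ring

lemma integral_pow_gaussianReal (v : ℝ≥0) (k : ℕ) :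
    ∫ x, x ^ k ∂gaussianReal 0 v = (expHalfMulSqDerivPoly v k).eval 0 := by
  have h := iteratedDeriv_mgf_zero (X := fun x => x) (μ := gaussianReal 0 v) (by simp) k
  simpa [mgf_fun_id_gaussianReal, iteratedDeriv_exp_half_mul_sq] using h.symm

section Algebra

variable {ι : Type*} [Fintype ι]

lemma prod_pow_ite_eq {M : Type*} [CommMonoid M] [DecidableEq ι] (ω : ι → M) (i : ι) :
    ∏ m, ω m ^ (if m = i then 1 else 0) = ω i := by
  simp [pow_ite]

lemma dotProduct_mulVec_self_eq_sum {R : Type*} [CommSemiring R] (W : Matrix ι ι R)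
    (ω : ι → R) : ω ⬝ᵥ W *ᵥ ω = ∑ p : ι × ι, W p.1 p.2 * (ω p.1 * ω p.2) := by
  simp only [dotProduct, mulVec, Finset.mul_sum, ← Finset.univ_product_univ, Finset.sum_product]
  exact Finset.sum_congr rfl fun _ _ => Finset.sum_congr rfl fun _ _ => by ring

lemma dotProduct_sq_eq_dotProduct_vecMulVec_mulVec {R : Type*} [CommSemiring R]
    (w ω : ι → R) : (w ⬝ᵥ ω) ^ 2 = ω ⬝ᵥ vecMulVec w w *ᵥ ω := by
  rw [vecMulVec_mulVec]
  simp [dotProduct_comm ω w, sq]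

lemma Matrix.IsSymm.add_dotProduct_mulVec_add {R : Type*} [CommRing R] {W : Matrix ι ι R}
    (hW : W.IsSymm) (a ω : ι → R) :
    (a + ω) ⬝ᵥ W *ᵥ (a + ω) = a ⬝ᵥ W *ᵥ a + 2 * ((W *ᵥ a) ⬝ᵥ ω) + ω ⬝ᵥ W *ᵥ ω := by
  have hcross : a ⬝ᵥ W *ᵥ ω = (W *ᵥ a) ⬝ᵥ ω := by
    rw [dotProduct_mulVec, ← hW.eq, vecMul_transpose, hW.eq]
  rw [mulVec_add, dotProduct_add, add_dotProduct, add_dotProduct, hcross,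
    dotProduct_comm ω (W *ᵥ a)]
  ring

end Algebra

section GaussianVector

variable {ι : Type*} [Fintype ι] {v : ℝ≥0}

lemma integral_prod_pow_pi_gaussianReal (e : ι → ℕ) :
    ∫ ω, ∏ m, ω m ^ e m ∂(Measure.pi fun _ : ι => gaussianReal 0 v)
      = ∏ m, (expHalfMulSqDerivPoly v (e m)).eval 0 := by
  simp only [integral_fintype_prod_eq_prod (fun m (x : ℝ) => x ^ e m), integral_pow_gaussianReal]

lemma integral_eval_mul_eval_pi_gaussianReal [DecidableEq ι] (i j : ι) :
    ∫ ω, ω i * ω j ∂(Measure.pi fun _ : ι => gaussianReal 0 v)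
      = if i = j then (v : ℝ) else 0 := by
  let e : ι → ℕ := fun m => (if m = i then 1 else 0) + (if m = j then 1 else 0)
  have he : ∀ ω : ι → ℝ, ω i * ω j = ∏ m, ω m ^ e m := fun ω => by
    simp only [e, pow_add, Finset.prod_mul_distrib, prod_pow_ite_eq]
  simp_rw [he, integral_prod_pow_pi_gaussianReal]
  rw [← Finset.prod_subset (Finset.subset_univ {i, j}) fun m _ hm => by
    simp_all [e, expHalfMulSqDerivPoly]]
  rcases eq_or_ne i j with hij | hij <;>
    simp_all [e, Finset.prod_insert, expHalfMulSqDerivPoly, eq_comm]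

lemma integral_eval_mul_eval_mul_eval_mul_eval_pi_gaussianReal [DecidableEq ι] (i j k l : ι) :
    ∫ ω, ω i * ω j * ω k * ω l ∂(Measure.pi fun _ : ι => gaussianReal 0 v)
      = (v : ℝ) ^ 2 * ((if i = j then 1 else 0) * (if k = l then 1 else 0)
        + (if i = k then 1 else 0) * (if j = l then 1 else 0)
        + (if i = l then 1 else 0) * (if j = k then 1 else 0)) := by
  let e : ι → ℕ := fun m => (if m = i then 1 else 0) + (if m = j then 1 else 0)
    + (if m = k then 1 else 0) + (if m = l then 1 else 0)
  have he : ∀ ω : ι → ℝ, ω i * ω j * ω k * ω l = ∏ m, ω m ^ e m := fun ω => by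
    simp only [e, pow_add, Finset.prod_mul_distrib, prod_pow_ite_eq]
  simp_rw [he, integral_prod_pow_pi_gaussianReal]
  rw [← Finset.prod_subset (Finset.subset_univ {i, j, k, l}) fun m _ hm => by
    simp_all [e, expHalfMulSqDerivPoly]]
  rcases eq_or_ne i j with hij | hij <;> rcases eq_or_ne i k with hik | hik <;>
    rcases eq_or_ne i l with hil | hil <;> rcases eq_or_ne j k with hjk | hjk <;>
    rcases eq_or_ne j l with hjl | hjl <;> rcases eq_or_ne k l with hkl | hkl <;>
    subst_vars <;> simp_all [e, Finset.prod_insert, expHalfMulSqDerivPoly, eq_comm] <;> ring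

lemma measurePreserving_neg_pi_gaussianReal :
    MeasurePreserving (fun ω : ι → ℝ => -ω) (Measure.pi fun _ => gaussianReal 0 v)
      (Measure.pi fun _ => gaussianReal 0 v) :=
  measurePreserving_pi _ _ (f := fun _ (x : ℝ) => -x) fun _ =>
    ⟨measurable_neg, by simpa using gaussianReal_map_neg (μ := 0) (v := v)⟩

lemma integral_eq_zero_of_odd_pi_gaussianReal {F : (ι → ℝ) → ℝ} (hF : ∀ ω, F (-ω) = -F ω) :
    ∫ ω, F ω ∂(Measure.pi fun _ => gaussianReal 0 v) = 0 := by
  have h := (measurePreserving_neg_pi_gaussianReal (ι := ι) (v := v)).integral_comp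
    measurableEmbedding_neg F
  simp only [hF, integral_neg] at h
  linarith

lemma memLp_eval_pi_gaussianReal {p : ℝ≥0∞} (hp : p ≠ ∞) (i : ι) :
    MemLp (fun ω : ι → ℝ => ω i) p (Measure.pi fun _ => gaussianReal 0 v) := by
  have h := memLp_id_gaussianReal' (μ := 0) (v := v) p hp
  rw [← (measurePreserving_eval (fun _ : ι => gaussianReal 0 v) i).map_eq] at h
  exact (memLp_map_measure_iff aestronglyMeasurable_id
    (measurable_pi_apply i).aemeasurable).1 h

lemma memLp_eval_mul_eval_pi_gaussianReal (i j : ι) :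
    MemLp (fun ω : ι → ℝ => ω i * ω j) 2 (Measure.pi fun _ => gaussianReal 0 v) := by
  have : ENNReal.HolderTriple 4 4 2 := ⟨by
    rw [← two_mul, show (4 : ℝ≥0∞) = 2 * 2 by norm_num, ENNReal.mul_inv (by simp) (by simp),
      ← mul_assoc, ENNReal.mul_inv_cancel (by simp) (by simp), one_mul]⟩
  exact (memLp_eval_pi_gaussianReal (p := 4) (by simp) j).mul
    (memLp_eval_pi_gaussianReal (p := 4) (by simp) i)

lemma memLp_dotProduct_pi_gaussianReal (w : ι → ℝ) :
    MemLp (fun ω => w ⬝ᵥ ω) 2 (Measure.pi fun _ : ι => gaussianReal 0 v) :=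
  memLp_finsetSum _ fun i _ => (memLp_eval_pi_gaussianReal (p := 2) (by simp) i).const_mul (w i)

lemma memLp_dotProduct_mulVec_self_pi_gaussianReal (W : Matrix ι ι ℝ) :
    MemLp (fun ω => ω ⬝ᵥ W *ᵥ ω) 2 (Measure.pi fun _ : ι => gaussianReal 0 v) := by
  simp_rw [dotProduct_mulVec_self_eq_sum]
  exact memLp_finsetSum _ fun (p : ι × ι) _ =>
    (memLp_eval_mul_eval_pi_gaussianReal p.1 p.2).const_mul _

lemma integral_dotProduct_mulVec_self_pi_gaussianReal (W : Matrix ι ι ℝ) :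
    ∫ ω, ω ⬝ᵥ W *ᵥ ω ∂(Measure.pi fun _ : ι => gaussianReal 0 v) = v * trace W := by
  classical
  simp_rw [dotProduct_mulVec_self_eq_sum]
  rw [integral_finsetSum _ fun p _ =>
    ((memLp_eval_mul_eval_pi_gaussianReal p.1 p.2).integrable one_le_two).const_mul _]
  simp [integral_const_mul, integral_eval_mul_eval_pi_gaussianReal, Fintype.sum_prod_type,
    trace, Finset.mul_sum, mul_comm]

lemma integral_dotProduct_mulVec_self_sq_pi_gaussianReal (W : Matrix ι ι ℝ) :
    ∫ ω, (ω ⬝ᵥ W *ᵥ ω) ^ 2 ∂(Measure.pi fun _ : ι => gaussianReal 0 v)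
      = v ^ 2 * (trace W ^ 2 + trace (Wᵀ * W) + trace (W * W)) := by
  classical
  have hexp : ∀ ω : ι → ℝ, (ω ⬝ᵥ W *ᵥ ω) ^ 2 = ∑ p : ι × ι, ∑ q : ι × ι,
      W p.1 p.2 * W q.1 q.2 * (ω p.1 * ω p.2 * ω q.1 * ω q.2) := fun ω => by
    rw [dotProduct_mulVec_self_eq_sum, sq, Finset.sum_mul_sum]
    exact Finset.sum_congr rfl fun _ _ => Finset.sum_congr rfl fun _ _ => by ring
  have hint : ∀ p q : ι × ι, Integrable (fun ω : ι → ℝ => ω p.1 * ω p.2 * ω q.1 * ω q.2)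
      (Measure.pi fun _ : ι => gaussianReal 0 v) := fun p q => by
    refine ((memLp_eval_mul_eval_pi_gaussianReal p.1 p.2).integrable_mul
      (memLp_eval_mul_eval_pi_gaussianReal q.1 q.2)).congr (.of_forall fun ω => ?_)
    simp only [Pi.mul_apply, mul_assoc]
  simp_rw [hexp]
  rw [integral_finsetSum _ fun p _ => integrable_finsetSum _ fun q _ => (hint p q).const_mul _]
  simp_rw [integral_finsetSum _ fun q _ => (hint _ q).const_mul _, integral_const_mul,
    integral_eval_mul_eval_mul_eval_mul_eval_pi_gaussianReal]
  simp only [sq, mul_ite, mul_one, mul_zero, mul_add, Finset.sum_add_distrib,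
    Fintype.sum_prod_type, Finset.sum_ite_eq, Finset.mem_univ, ↓reduceIte, Finset.sum_ite_irrel,
    Finset.sum_const_zero, trace, diag_apply, Finset.mul_sum, Finset.sum_mul, mul_apply,
    transpose_apply]
  refine congrArg₂ (· + ·) (congrArg₂ (· + ·) ?_ ?_) ?_ <;> rw [Finset.sum_comm] <;>
    exact Finset.sum_congr rfl fun _ _ => Finset.sum_congr rfl fun _ _ => by ring

lemma variance_dotProduct_mulVec_self_pi_gaussianReal (W : Matrix ι ι ℝ) :
    Var[fun ω => ω ⬝ᵥ W *ᵥ ω; Measure.pi fun _ : ι => gaussianReal 0 v]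
      = v ^ 2 * (trace (Wᵀ * W) + trace (W * W)) := by
  rw [variance_eq_sub (memLp_dotProduct_mulVec_self_pi_gaussianReal W)]
  simp only [Pi.pow_apply]
  rw [integral_dotProduct_mulVec_self_sq_pi_gaussianReal,
    integral_dotProduct_mulVec_self_pi_gaussianReal]
  ring

lemma integral_two_dotProduct_add_dotProduct_mulVec_self_sub_sq_pi_gaussianReal
    (w : ι → ℝ) (W : Matrix ι ι ℝ) :
    ∫ ω, (2 * (w ⬝ᵥ ω) + (ω ⬝ᵥ W *ᵥ ω - v * trace W)) ^ 2
        ∂(Measure.pi fun _ : ι => gaussianReal 0 v)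
      = 4 * v * (w ⬝ᵥ w) + v ^ 2 * (trace (Wᵀ * W) + trace (W * W)) := by
  have hT := memLp_dotProduct_pi_gaussianReal (v := v) w
  have hR : MemLp (fun ω => ω ⬝ᵥ W *ᵥ ω - v * trace W) 2
      (Measure.pi fun _ : ι => gaussianReal 0 v) :=
    (memLp_dotProduct_mulVec_self_pi_gaussianReal W).sub (memLp_const _)
  have hT2 : Integrable (fun ω => 4 * (w ⬝ᵥ ω) ^ 2)
      (Measure.pi fun _ : ι => gaussianReal 0 v) :=
    hT.integrable_sq.const_mul 4
  have hTR : Integrable (fun ω => 4 * ((w ⬝ᵥ ω) * (ω ⬝ᵥ W *ᵥ ω - v * trace W)))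
      (Measure.pi fun _ : ι => gaussianReal 0 v) :=
    (hT.integrable_mul hR).const_mul 4
  have hcross : ∫ ω, (w ⬝ᵥ ω) * (ω ⬝ᵥ W *ᵥ ω - v * trace W)
      ∂(Measure.pi fun _ : ι => gaussianReal 0 v) = 0 :=
    integral_eq_zero_of_odd_pi_gaussianReal fun ω => by simp [mulVec_neg]
  have hexp : ∀ ω : ι → ℝ, (2 * (w ⬝ᵥ ω) + (ω ⬝ᵥ W *ᵥ ω - v * trace W)) ^ 2
      = 4 * (w ⬝ᵥ ω) ^ 2 + 4 * ((w ⬝ᵥ ω) * (ω ⬝ᵥ W *ᵥ ω - v * trace W))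
        + (ω ⬝ᵥ W *ᵥ ω - v * trace W) ^ 2 :=
    fun ω => by ring
  simp_rw [hexp]
  rw [integral_add (hT2.fun_add hTR) hR.integrable_sq, integral_add hT2 hTR,
    integral_const_mul, integral_const_mul, hcross,
    ← integral_dotProduct_mulVec_self_pi_gaussianReal,
    ← variance_eq_integral (memLp_dotProduct_mulVec_self_pi_gaussianReal W).aemeasurable,
    variance_dotProduct_mulVec_self_pi_gaussianReal]
  simp_rw [dotProduct_sq_eq_dotProduct_vecMulVec_mulVec]
  rw [integral_dotProduct_mulVec_self_pi_gaussianReal, trace_vecMulVec]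
  ring

end GaussianVector

theorem variance_CBC_general
    (n : ℕ) (σ : ℝ)
    (W : Matrix (Fin n) (Fin n) ℝ) (hW : W.IsSymm)
    (a : Fin n → ℝ) (κ : ℝ) :
    ∫ ω : Fin n → ℝ,
        (((a + ω) ⬝ᵥ W.mulVec (a + ω) + κ)
          - (a ⬝ᵥ W.mulVec a + σ ^ 2 * W.trace + κ)) ^ 2
        ∂(Measure.pi fun _ : Fin n => gaussianReal 0 ⟨σ ^ 2, sq_nonneg σ⟩)
      = 4 * σ ^ 2 * (a ⬝ᵥ (Wᵀ * W).mulVec a)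
        + 2 * σ ^ 4 * (Wᵀ * W).trace := by
  set v : ℝ≥0 := ⟨σ ^ 2, sq_nonneg σ⟩
  have hv : (v : ℝ) = σ ^ 2 := rfl
  have hcentred : ∀ ω : Fin n → ℝ, ((a + ω) ⬝ᵥ W *ᵥ (a + ω) + κ)
      - (a ⬝ᵥ W *ᵥ a + σ ^ 2 * W.trace + κ)
        = 2 * ((W *ᵥ a) ⬝ᵥ ω) + (ω ⬝ᵥ W *ᵥ ω - v * W.trace) := fun ω => by
    rw [hW.add_dotProduct_mulVec_add, hv]
    ring
  simp_rw [hcentred,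
    integral_two_dotProduct_add_dotProduct_mulVec_self_sub_sq_pi_gaussianReal, hv]
  have hnorm : a ⬝ᵥ (Wᵀ * W) *ᵥ a = (W *ᵥ a) ⬝ᵥ (W *ᵥ a) := by
    rw [← mulVec_mulVec, dotProduct_mulVec, vecMul_transpose]
  rw [hnorm, hW.eq]
  ring

/-- Variance of the control barrier condition: for Gaussian noise
`ω ~ N(0, σ²·I)`, `Var[(a+ω)ᵀW(a+ω) + κ] = 4σ²·aᵀWᵀWa + 2σ⁴·tr(WᵀW)`. -/
theorem variance_CBC
    (n : ℕ) (hn : 0 < n) (σ : ℝ) (hσ : 0 ≤ σ)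
    (W : Matrix (Fin n) (Fin n) ℝ) (hW : W.IsSymm)
    (a : Fin n → ℝ) (κ : ℝ) :
    ∫ ω : Fin n → ℝ,
        (((a + ω) ⬝ᵥ W.mulVec (a + ω) + κ)
          - (a ⬝ᵥ W.mulVec a + σ ^ 2 * W.trace + κ)) ^ 2
        ∂(Measure.pi fun _ : Fin n => gaussianReal 0 ⟨σ ^ 2, sq_nonneg σ⟩)
      = 4 * σ ^ 2 * (a ⬝ᵥ (Wᵀ * W).mulVec a)
        + 2 * σ ^ 4 * (Wᵀ * W).trace :=
  variance_CBC_general n σ W hW a κ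
end

section
/- Let n be a positive integer, let w be a random vector in ℝⁿ whose law P is the product measure of n independent standard one-dimensional Gaussian measures N(0,1), let L be a real n×n matrix, μ ∈ ℝⁿ, a ∈ ℝⁿ, and set Σ = L·Lᵀ with aᵀΣa > 0. Let λ ∈ (0,1), b ∈ ℝ, and let t ∈ ℝ satisfy (2/√π)·∫₀ᵗ exp(−u²) du = 1 − 2λ. Then P({w : aᵀ(μ + L·w) ≤ b}) ≤ λ if and only if aᵀμ − b ≥ t·√(2·aᵀΣa). -/
open MeasureTheory ProbabilityTheory Matrix Real Set
open scoped NNReal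

/-!
The functional `w ↦ aᵀ(μ + L w)` is `aᵀμ + cᵀw` with `c = Lᵀa`, and a standard Gaussian vector
pushed forward by `w ↦ cᵀw` is the centred Gaussian `N(0, ‖c‖²)` with `‖c‖² = aᵀΣa`. Its
distribution function at `x` is `(1 + erf (x / √(2 aᵀΣa))) / 2`, and `λ = (1 + erf (-t)) / 2`
since `erf` is odd, so the chance constraint is an inequality between two values of the strictly
increasing function `erf`.
-/

noncomputable def erf (x : ℝ) : ℝ := 2 / √π * ∫ u in (0 : ℝ)..x, exp (-u ^ 2)

lemma erf_neg (x : ℝ) : erf (-x) = -erf x := by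
  have h := intervalIntegral.integral_comp_neg (a := 0) (b := x) fun u => exp (-u ^ 2)
  simp only [neg_sq, neg_zero] at h
  rw [erf, erf, intervalIntegral.integral_symm, ← h, mul_neg]

lemma erf_strictMono : StrictMono erf := by
  intro x y hxy
  have hint (a b : ℝ) : IntervalIntegrable (fun u => exp (-u ^ 2)) volume a b :=
    (by fun_prop : Continuous fun u : ℝ => exp (-u ^ 2)).intervalIntegrable a b
  have hpos : 0 < ∫ u in x..y, exp (-u ^ 2) :=
    intervalIntegral.intervalIntegral_pos_of_pos (hint x y) (fun u => exp_pos _) hxy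
  rw [erf, erf, ← intervalIntegral.integral_add_adjacent_intervals (hint 0 x) (hint x y)]
  have : 0 < 2 / √π := by positivity
  nlinarith

lemma integral_Iic_exp_neg_sq (s : ℝ) :
    ∫ u in Iic s, exp (-u ^ 2) = √π / 2 + ∫ u in (0 : ℝ)..s, exp (-u ^ 2) := by
  have hint : Integrable fun u : ℝ => exp (-u ^ 2) := by
    simpa using integrable_exp_neg_mul_sq one_pos
  have hhalf : ∫ u in Iic (0 : ℝ), exp (-u ^ 2) = √π / 2 := by
    have h := integral_comp_neg_Iic 0 fun u : ℝ => exp (-u ^ 2)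
    simp only [neg_sq, neg_zero] at h
    simpa [h] using integral_gaussian_Ioi 1
  rw [← hhalf, ← intervalIntegral.integral_Iic_sub_Iic hint.integrableOn hint.integrableOn]
  ring

lemma gaussianPDFReal_zero_half (u : ℝ) : gaussianPDFReal 0 2⁻¹ u = (√π)⁻¹ * exp (-u ^ 2) := by
  simp [gaussianPDFReal]
  field_simp

lemma gaussianReal_zero_half_Iic (s : ℝ) :
    (gaussianReal 0 2⁻¹ (Iic s)).toReal = (1 + erf s) / 2 := by
  rw [gaussianReal_apply_eq_integral _ (by norm_num), ENNReal.toReal_ofReal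
    (setIntegral_nonneg measurableSet_Iic fun u _ => gaussianPDFReal_nonneg _ _ _)]
  simp_rw [gaussianPDFReal_zero_half]
  rw [integral_const_mul, integral_Iic_exp_neg_sq, erf]
  field_simp

lemma gaussianReal_zero_Iic {v : ℝ≥0} (hv : v ≠ 0) (x : ℝ) :
    (gaussianReal 0 v (Iic x)).toReal = (1 + erf (x / √(2 * v))) / 2 := by
  set σ := √(2 * v)
  have hσ : 0 < σ := by positivity
  have hmap : (gaussianReal 0 v).map (· / σ) = gaussianReal 0 2⁻¹ := by
    rw [gaussianReal_map_div_const, zero_div]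
    congr
    ext
    rw [NNReal.coe_div, NNReal.coe_mk, Real.sq_sqrt (by positivity)]
    field_simp
    norm_num
  have hpre : (· / σ) ⁻¹' Iic (x / σ) = Iic x := by
    ext y
    simp [div_le_div_iff_of_pos_right hσ]
  rw [← gaussianReal_zero_half_Iic, ← hmap,
    Measure.map_apply (measurable_div_const σ) measurableSet_Iic, hpre]

lemma stdGaussian_map_innerSL {E : Type*} [NormedAddCommGroup E] [InnerProductSpace ℝ E]
    [FiniteDimensional ℝ E] [MeasurableSpace E] [BorelSpace E] (c : E) :
    (stdGaussian E).map (innerSL ℝ c) = gaussianReal 0 (‖c‖₊ ^ 2) := by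
  rw [IsGaussian.map_eq_gaussianReal, integral_strongDual_stdGaussian, variance_dual_stdGaussian,
    innerSL_apply_norm]
  congr
  ext
  simp

lemma pi_gaussianReal_map_dotProduct {ι : Type*} [Fintype ι] (c : ι → ℝ) :
    (Measure.pi fun _ : ι => gaussianReal 0 1).map (c ⬝ᵥ ·) =
      gaussianReal 0 (‖WithLp.toLp 2 c‖₊ ^ 2) := by
  rw [← stdGaussian_map_innerSL, ← map_pi_eq_stdGaussian,
    Measure.map_map (by fun_prop) (by fun_prop)]
  congr
  ext w
  simp [EuclideanSpace.inner_toLp_toLp, dotProduct_comm]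

lemma dotProduct_mul_transpose_mulVec {m n R : Type*} [Fintype m] [Fintype n] [CommSemiring R]
    (L : Matrix m n R) (a : m → R) :
    a ⬝ᵥ (L * Lᵀ) *ᵥ a = Lᵀ *ᵥ a ⬝ᵥ Lᵀ *ᵥ a := by
  rw [← mulVec_mulVec, dotProduct_mulVec, ← mulVec_transpose]

theorem multivariate_chance_constraint_general
    (n : ℕ)
    (L : Matrix (Fin n) (Fin n) ℝ) (μ a : Fin n → ℝ)
    (hpos : 0 < a ⬝ᵥ (L * Lᵀ).mulVec a)
    (lam : ℝ) (b t : ℝ)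
    (ht : (2 / Real.sqrt Real.pi) * ∫ u in (0:ℝ)..t, Real.exp (-u ^ 2)
            = 1 - 2 * lam) :
    ((Measure.pi fun _ : Fin n => gaussianReal 0 1)
        {w : Fin n → ℝ | a ⬝ᵥ (μ + L.mulVec w) ≤ b}).toReal ≤ lam
      ↔ a ⬝ᵥ μ - b ≥ t * Real.sqrt (2 * (a ⬝ᵥ (L * Lᵀ).mulVec a)) := by
  set c := Lᵀ *ᵥ a
  have hvar : ((‖WithLp.toLp 2 c‖₊ ^ 2 : ℝ≥0) : ℝ) = a ⬝ᵥ (L * Lᵀ) *ᵥ a := by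
    rw [dotProduct_mul_transpose_mulVec, NNReal.coe_pow, coe_nnnorm,
      ← real_inner_self_eq_norm_sq, EuclideanSpace.inner_toLp_toLp]
    rfl
  have hset : {w | a ⬝ᵥ (μ + L *ᵥ w) ≤ b} = (c ⬝ᵥ ·) ⁻¹' Iic (b - a ⬝ᵥ μ) := by
    ext w
    simp only [mem_ofPred_eq, mem_preimage, mem_Iic, dotProduct_add, dotProduct_mulVec,
      ← mulVec_transpose, c, le_sub_iff_add_le']
  have hlam : lam = (1 + erf (-t)) / 2 := by
    rw [erf_neg, erf, ht]
    ring
  have hσ : 0 < √(2 * (a ⬝ᵥ (L * Lᵀ) *ᵥ a)) := by positivity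
  rw [hset, ← Measure.map_apply (by fun_prop) measurableSet_Iic, pi_gaussianReal_map_dotProduct,
    gaussianReal_zero_Iic (by rw [← NNReal.coe_ne_zero, hvar]; exact hpos.ne'), hvar, hlam,
    div_le_div_iff_of_pos_right two_pos, add_le_add_iff_left, erf_strictMono.le_iff_le,
    div_le_iff₀ hσ]
  constructor <;> intro <;> linarith

/-- Multivariate linear chance constraint (Lemma 2): for a Gaussian vector
`z = μ + L·w` with covariance `Σ = L·Lᵀ`, `aᵀΣa > 0`, and
`t = erf⁻¹(1 − 2λ)`, one has `P(aᵀz ≤ b) ≤ λ ↔ aᵀμ − b ≥ t·√(2 aᵀΣa)`. -/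
theorem multivariate_chance_constraint
    (n : ℕ) (hn : 0 < n)
    (L : Matrix (Fin n) (Fin n) ℝ) (μ a : Fin n → ℝ)
    (hpos : 0 < a ⬝ᵥ (L * Lᵀ).mulVec a)
    (lam : ℝ) (hlam : lam ∈ Set.Ioo (0:ℝ) 1) (b t : ℝ)
    (ht : (2 / Real.sqrt Real.pi) * ∫ u in (0:ℝ)..t, Real.exp (-u ^ 2)
            = 1 - 2 * lam) :
    ((Measure.pi fun _ : Fin n => gaussianReal 0 1)
        {w : Fin n → ℝ | a ⬝ᵥ (μ + L.mulVec w) ≤ b}).toReal ≤ lam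
      ↔ a ⬝ᵥ μ - b ≥ t * Real.sqrt (2 * (a ⬝ᵥ (L * Lᵀ).mulVec a)) :=
  multivariate_chance_constraint_general n L μ a hpos lam b t ht
end
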